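/- arXiv:1901.00107 — 6 statements merged into one kernel-verified Lean document; each statement's English description precedes it below -/
import Mathlib

section
/- Let f : ℝ × ℝ^d → ℝ^d be continuous, let Ā : [0,1]×[0,1] → ℝ and B̄, B, C : [0,1] → ℝ be coefficient functions, let h ∈ ℝ, t₀ ∈ ℝ, and (q₀,q₀'), (q₁,q₁') ∈ ℝ^d × ℝ^d, and set t₁ = t₀ + h. Define the adjoint coefficients C*(τ) = 1 − C(1−τ), Ā*(τ,σ) = B(1−σ)(1 − C(1−τ)) − B̄(1−σ) + Ā(1−τ,1−σ), B̄*(τ) = B(1−τ) − B̄(1−τ), B*(τ) = B(1−τ). Then a continuous function Q : [0,1] → ℝ^d satisfies the csRKN equations with coefficients (Ā,B̄,B,C), step size −h, initial data (t₁,q₁,q₁') and outputs (q₀,q₀') if and only if the function Q*(τ) = Q(1−τ) satisfies the csRKN equations with the adjoint coefficients (Ā*,B̄*,B*,C*), step size h, initial data (t₀,q₀,q₀') and outputs (q₁,q₁'). -/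
open Set MeasureTheory

noncomputable section

/-- A continuous-stage Runge–Kutta–Nyström (csRKN) method with coefficient functions
`Abar : [0,1]×[0,1] → ℝ` and `Bbar, B, C : [0,1] → ℝ`, applied to `q'' = f(t,q)` with
step size `h` and initial data `(t₀, q₀, q₀')`: the stage function `Q` and the
outputs `(q₁, q₁')` satisfy the csRKN equations. -/
def csRKN {d : ℕ} (f : ℝ → (Fin d → ℝ) → (Fin d → ℝ))
    (Abar : ℝ → ℝ → ℝ) (Bbar B C : ℝ → ℝ)
    (h t₀ : ℝ) (q₀ q₀' : Fin d → ℝ)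
    (Q : ℝ → Fin d → ℝ) (q₁ q₁' : Fin d → ℝ) : Prop :=
  (∀ τ ∈ Set.Icc (0:ℝ) 1,
      Q τ = q₀ + (h * C τ) • q₀' +
        h ^ 2 • ∫ σ in (0:ℝ)..1, Abar τ σ • f (t₀ + C σ * h) (Q σ)) ∧
  q₁ = q₀ + h • q₀' + h ^ 2 • ∫ τ in (0:ℝ)..1, Bbar τ • f (t₀ + C τ * h) (Q τ) ∧
  q₁' = q₀' + h • ∫ τ in (0:ℝ)..1, B τ • f (t₀ + C τ * h) (Q τ)

/-!
Reflecting the stage variable, `σ ↦ 1 - σ`, sends the adjoint stage time `t₀ + C*(σ) h` to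
`t₁ - C(σ) h`, so every integral of the adjoint step becomes a linear combination of the three
integrals `∫ B F`, `∫ B̄ F`, `∫ Ā(τ, ·) F` of the backward step, with `F(σ) = f(t₁ - C(σ) h, Q(σ))`.
Both systems are then affine relations between `q₀, q₀', q₁, q₁'` and these integrals: the velocity
equations agree, and solving either system's position equations for the other end point gives the
other system.
-/

theorem forall_mem_Icc_zero_one_one_sub_iff {P : ℝ → Prop} :
    (∀ τ ∈ Icc (0 : ℝ) 1, P (1 - τ)) ↔ ∀ τ ∈ Icc (0 : ℝ) 1, P τ := by
  refine ⟨fun H τ hτ => ?_, fun H τ hτ => H _ ⟨by linarith [hτ.2], by linarith [hτ.1]⟩⟩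
  simpa only [sub_sub_cancel] using H (1 - τ) ⟨by linarith [hτ.2], by linarith [hτ.1]⟩

section Integrals

variable {E : Type*} [NormedAddCommGroup E] [NormedSpace ℝ E]

theorem intervalIntegral_comp_one_sub (G : ℝ → E) :
    ∫ σ in (0 : ℝ)..1, G (1 - σ) = ∫ σ in (0 : ℝ)..1, G σ := by
  simp [intervalIntegral.integral_comp_sub_left]

variable {F : ℝ → E} {u v w : ℝ → ℝ}

theorem intervalIntegral_comp_one_sub_sub_smul
    (hu : IntervalIntegrable (fun σ => u σ • F σ) volume 0 1)
    (hv : IntervalIntegrable (fun σ => v σ • F σ) volume 0 1) :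
    ∫ σ in (0 : ℝ)..1, (u (1 - σ) - v (1 - σ)) • F (1 - σ) =
      (∫ σ in (0 : ℝ)..1, u σ • F σ) - ∫ σ in (0 : ℝ)..1, v σ • F σ := by
  rw [intervalIntegral_comp_one_sub (fun σ => (u σ - v σ) • F σ),
    ← intervalIntegral.integral_sub hu hv]
  simp only [sub_smul]

theorem intervalIntegral_comp_one_sub_mul_sub_add_smul (k : ℝ)
    (hu : IntervalIntegrable (fun σ => u σ • F σ) volume 0 1)
    (hv : IntervalIntegrable (fun σ => v σ • F σ) volume 0 1)
    (hw : IntervalIntegrable (fun σ => w σ • F σ) volume 0 1) :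
    ∫ σ in (0 : ℝ)..1, (u (1 - σ) * k - v (1 - σ) + w (1 - σ)) • F (1 - σ) =
      k • (∫ σ in (0 : ℝ)..1, u σ • F σ) - (∫ σ in (0 : ℝ)..1, v σ • F σ) +
        ∫ σ in (0 : ℝ)..1, w σ • F σ := by
  have hku : IntervalIntegrable (fun σ => k • (u σ • F σ)) volume 0 1 := hu.smul k
  rw [intervalIntegral_comp_one_sub (fun σ => (u σ * k - v σ + w σ) • F σ),
    ← intervalIntegral.integral_smul, ← intervalIntegral.integral_sub hku hv,
    ← intervalIntegral.integral_add (hku.sub hv) hw]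
  congr 1 with σ
  module

end Integrals

theorem backward_equations_iff_adjoint_equations {E : Type*} [AddCommGroup E] [Module ℝ E]
    (h : ℝ) (c : ℝ → ℝ) (Q a aStar : ℝ → E) (bbar b bbarStar bStar q₀ q₀' q₁ q₁' : E)
    (haStar : ∀ τ, aStar τ = (1 - c (1 - τ)) • b - bbar + a (1 - τ))
    (hbbarStar : bbarStar = b - bbar) (hbStar : bStar = b) :
    ((∀ τ ∈ Icc (0 : ℝ) 1, Q τ = q₁ + (-h * c τ) • q₁' + (-h) ^ 2 • a τ) ∧
        q₀ = q₁ + (-h) • q₁' + (-h) ^ 2 • bbar ∧ q₀' = q₁' + (-h) • b) ↔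
      ((∀ τ ∈ Icc (0 : ℝ) 1,
          Q (1 - τ) = q₀ + (h * (1 - c (1 - τ))) • q₀' + h ^ 2 • aStar τ) ∧
        q₁ = q₀ + h • q₀' + h ^ 2 • bbarStar ∧ q₁' = q₀' + h • bStar) := by
  subst bbarStar bStar
  simp only [haStar]
  rw [forall_mem_Icc_zero_one_one_sub_iff (P := fun τ =>
    Q τ = q₀ + (h * (1 - c τ)) • q₀' + h ^ 2 • ((1 - c τ) • b - bbar + a τ))]
  constructor <;>
  · rintro ⟨hQ, rfl, rfl⟩
    exact ⟨fun τ hτ => by rw [hQ τ hτ]; module, by module, by module⟩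

/-- a continuous `Q` satisfies the csRKN equations with coefficients
`(Ā, B̄, B, C)`, step size `-h`, initial data `(t₁, q₁, q₁')` and outputs `(q₀, q₀')`
iff `Q*(τ) = Q(1-τ)` satisfies the csRKN equations with the adjoint coefficients
`(Ā*, B̄*, B*, C*)`, step size `h`, initial data `(t₀, q₀, q₀')` and outputs `(q₁, q₁')`. -/
theorem csRKN_adjoint_iff {d : ℕ} (f : ℝ → (Fin d → ℝ) → (Fin d → ℝ))
    (hf : Continuous fun p : ℝ × (Fin d → ℝ) => f p.1 p.2)
    (Abar : ℝ → ℝ → ℝ) (Bbar B C : ℝ → ℝ)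
    (hAc : Continuous fun p : ℝ × ℝ => Abar p.1 p.2)
    (hBbarc : Continuous Bbar) (hBc : Continuous B) (hCc : Continuous C)
    (h t₀ t₁ : ℝ) (ht₁ : t₁ = t₀ + h)
    (q₀ q₀' q₁ q₁' : Fin d → ℝ)
    (Q : ℝ → Fin d → ℝ) (hQ : ContinuousOn Q (Set.Icc 0 1)) :
    csRKN f Abar Bbar B C (-h) t₁ q₁ q₁' Q q₀ q₀' ↔
      csRKN f
        (fun τ σ => B (1 - σ) * (1 - C (1 - τ)) - Bbar (1 - σ) + Abar (1 - τ) (1 - σ))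
        (fun τ => B (1 - τ) - Bbar (1 - τ))
        (fun τ => B (1 - τ))
        (fun τ => 1 - C (1 - τ))
        h t₀ q₀ q₀' (fun τ => Q (1 - τ)) q₁ q₁' := by
  set F : ℝ → Fin d → ℝ := fun σ => f (t₁ + C σ * -h) (Q σ)
  have hF : ContinuousOn F (Icc 0 1) :=
    hf.comp_continuousOn ((continuous_const.add (hCc.mul continuous_const)).continuousOn.prodMk hQ)
  have hintegrable : ∀ w : ℝ → ℝ, Continuous w →
      IntervalIntegrable (fun σ => w σ • F σ) volume 0 1 :=
    fun w hw => (hw.continuousOn.smul hF).intervalIntegrable_of_Icc zero_le_one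
  have hstage : ∀ σ, t₀ + (1 - C (1 - σ)) * h = t₁ + C (1 - σ) * -h := fun σ => by
    rw [ht₁]; ring
  unfold csRKN
  simp only [hstage]
  exact backward_equations_iff_adjoint_equations h C Q
    (fun τ => ∫ σ in (0 : ℝ)..1, Abar τ σ • F σ) _
    (∫ σ in (0 : ℝ)..1, Bbar σ • F σ) (∫ σ in (0 : ℝ)..1, B σ • F σ) _ _ q₀ q₀' q₁ q₁'
    (fun τ => intervalIntegral_comp_one_sub_mul_sub_add_smul _ (hintegrable B hBc)
      (hintegrable Bbar hBbarc) (hintegrable _ (hAc.uncurry_left (1 - τ))))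
    (intervalIntegral_comp_one_sub_sub_smul (hintegrable B hBc) (hintegrable Bbar hBbarc))
    (intervalIntegral_comp_one_sub fun σ => B σ • F σ)

end
end

section
/- (Theorem 3.1) Let f : ℝ × ℝ^d → ℝ^d be continuous and suppose the coefficient functions Ā : [0,1]×[0,1] → ℝ and B̄, B, C : [0,1] → ℝ satisfy the symmetry conditions: C(τ) = 1 − C(1−τ), Ā(τ,σ) = B(1−σ)(1 − C(1−τ)) − B̄(1−σ) + Ā(1−τ,1−σ), B̄(τ) = B(1−τ) − B̄(1−τ), and B(τ) = B(1−τ), for all τ, σ ∈ [0,1]. Then the csRKN method is symmetric in the following sense: if a continuous Q : [0,1] → ℝ^d and (q₁,q₁') satisfy the csRKN equations with step size h and initial data (t₀,q₀,q₀'), then the function τ ↦ Q(1−τ) together with outputs (q₀,q₀') satisfies the csRKN equations with the same coefficients, step size −h, and initial data (t₀+h, q₁, q₁'). -/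
open Set MeasureTheory

noncomputable section

/-!
Let `g σ = f (t₀ + C σ h, Q σ)` be the stage forces of the forward step. Since
`C σ = 1 - C (1 - σ)`, the backward step from `(t₀ + h, q₁, q₁')` with stages `Q (1 - σ)`
sees exactly the forces `g (1 - σ)`, so after substituting `σ ↦ 1 - σ` each of its integrals is an
integral of `g` against a reflected weight. The symmetry conditions rewrite the reflected
weights as linear combinations of `B`, `B̄` and `Ā (1 - τ, ·)`, and the backward equations
become linear identities among `q₀, q₀', q₁, q₁'` and the integrals `∫ B g`, `∫ B̄ g`,
`∫ Ā (1 - τ, ·) g`, which follow from the forward equations.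
-/

section WeightedIntegral

variable {E : Type*} [NormedAddCommGroup E] [NormedSpace ℝ E]

theorem integral_smul_comp_one_sub (w : ℝ → ℝ) (g : ℝ → E) :
    ∫ σ in (0:ℝ)..1, w σ • g (1 - σ) = ∫ σ in (0:ℝ)..1, w (1 - σ) • g σ := by
  simpa using
    intervalIntegral.integral_comp_sub_left (a := 0) (b := 1) (fun σ => w (1 - σ) • g σ) 1

theorem integral_smul_congr_of_eqOn {w v : ℝ → ℝ} (g : ℝ → E) (hwv : EqOn w v (Icc 0 1)) :
    ∫ σ in (0:ℝ)..1, w σ • g σ = ∫ σ in (0:ℝ)..1, v σ • g σ :=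
  intervalIntegral.integral_congr fun σ hσ => by
    rw [uIcc_of_le zero_le_one] at hσ
    simp only [hwv hσ]

theorem intervalIntegrable_smul_of_continuousOn {w : ℝ → ℝ} {g : ℝ → E}
    (hw : ContinuousOn w (Icc 0 1)) (hg : ContinuousOn g (Icc 0 1)) :
    IntervalIntegrable (fun σ => w σ • g σ) volume 0 1 :=
  (hw.smul hg).intervalIntegrable_of_Icc zero_le_one

theorem integral_sub_smul {u v : ℝ → ℝ} {g : ℝ → E} (hu : ContinuousOn u (Icc 0 1))
    (hv : ContinuousOn v (Icc 0 1)) (hg : ContinuousOn g (Icc 0 1)) :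
    ∫ σ in (0:ℝ)..1, (u σ - v σ) • g σ =
      (∫ σ in (0:ℝ)..1, u σ • g σ) - ∫ σ in (0:ℝ)..1, v σ • g σ := by
  simp only [sub_smul]
  exact intervalIntegral.integral_sub (intervalIntegrable_smul_of_continuousOn hu hg)
    (intervalIntegrable_smul_of_continuousOn hv hg)

theorem integral_const_mul_sub_add_smul (c : ℝ) {u v w : ℝ → ℝ} {g : ℝ → E}
    (hu : ContinuousOn u (Icc 0 1)) (hv : ContinuousOn v (Icc 0 1))
    (hw : ContinuousOn w (Icc 0 1)) (hg : ContinuousOn g (Icc 0 1)) :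
    ∫ σ in (0:ℝ)..1, (c * u σ - v σ + w σ) • g σ =
      c • (∫ σ in (0:ℝ)..1, u σ • g σ) - (∫ σ in (0:ℝ)..1, v σ • g σ) +
        ∫ σ in (0:ℝ)..1, w σ • g σ := by
  have hcu : ContinuousOn (fun σ => c * u σ) (Icc 0 1) := continuousOn_const.mul hu
  simp only [add_smul]
  rw [intervalIntegral.integral_add _ (intervalIntegrable_smul_of_continuousOn hw hg),
    integral_sub_smul hcu hv hg]
  · simp only [mul_smul, intervalIntegral.integral_smul]
  · simpa only [sub_smul] using
      intervalIntegrable_smul_of_continuousOn (w := fun σ => c * u σ - v σ) (hcu.sub hv) hg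

end WeightedIntegral

section Symmetry

variable {Abar : ℝ → ℝ → ℝ} {Bbar B C : ℝ → ℝ}

theorem eqOn_Abar_one_sub
    (hsymC : ∀ τ ∈ Set.Icc (0:ℝ) 1, C τ = 1 - C (1 - τ))
    (hsymA : ∀ τ ∈ Set.Icc (0:ℝ) 1, ∀ σ ∈ Set.Icc (0:ℝ) 1,
      Abar τ σ = B (1 - σ) * (1 - C (1 - τ)) - Bbar (1 - σ) + Abar (1 - τ) (1 - σ))
    {τ : ℝ} (hτ : τ ∈ Icc (0:ℝ) 1) :
    EqOn (fun σ => Abar τ (1 - σ)) (fun σ => C τ * B σ - Bbar σ + Abar (1 - τ) σ)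
      (Icc 0 1) := by
  intro σ hσ
  have h := hsymA τ hτ (1 - σ) (Icc.one_sub_mem hσ)
  rwa [sub_sub_cancel, ← hsymC τ hτ, mul_comm] at h

theorem eqOn_Bbar_one_sub
    (hsymBbar : ∀ τ ∈ Set.Icc (0:ℝ) 1, Bbar τ = B (1 - τ) - Bbar (1 - τ))
    (hsymB : ∀ τ ∈ Set.Icc (0:ℝ) 1, B τ = B (1 - τ)) :
    EqOn (fun σ => Bbar (1 - σ)) (fun σ => B σ - Bbar σ) (Icc 0 1) := by
  intro σ hσ
  have := hsymBbar σ hσ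
  have := hsymB σ hσ
  simp only
  linarith

end Symmetry

theorem integral_smul_reversed_stage_force {α E : Type*} [NormedAddCommGroup E]
    [NormedSpace ℝ E] (f : ℝ → α → E) {C : ℝ → ℝ}
    (hsymC : ∀ τ ∈ Set.Icc (0:ℝ) 1, C τ = 1 - C (1 - τ)) (h t₀ : ℝ) (Q : ℝ → α)
    (w : ℝ → ℝ) :
    ∫ σ in (0:ℝ)..1, w σ • f (t₀ + h + C σ * -h) (Q (1 - σ)) =
      ∫ σ in (0:ℝ)..1, w (1 - σ) • f (t₀ + C σ * h) (Q σ) := by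
  rw [← integral_smul_comp_one_sub]
  refine intervalIntegral.integral_congr fun σ hσ => ?_
  rw [uIcc_of_le zero_le_one] at hσ
  have htime : t₀ + h + C σ * -h = t₀ + C (1 - σ) * h := by rw [hsymC σ hσ]; ring
  simp only [htime]

/-- Theorem 3.1: if the coefficients satisfy the symmetry conditions,
then the csRKN method is symmetric: whenever `Q, (q₁,q₁')` solve the csRKN equations
with step size `h` and data `(t₀,q₀,q₀')`, the reversed stage function `τ ↦ Q(1-τ)`
together with outputs `(q₀,q₀')` solves the csRKN equations with the same coefficients,
step size `-h` and data `(t₀+h, q₁, q₁')`. -/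
theorem csRKN_symmetric {d : ℕ} (f : ℝ → (Fin d → ℝ) → (Fin d → ℝ))
    (hf : Continuous fun p : ℝ × (Fin d → ℝ) => f p.1 p.2)
    (Abar : ℝ → ℝ → ℝ) (Bbar B C : ℝ → ℝ)
    (hAc : Continuous fun p : ℝ × ℝ => Abar p.1 p.2)
    (hBbarc : Continuous Bbar) (hBc : Continuous B) (hCc : Continuous C)
    (hsymC : ∀ τ ∈ Set.Icc (0:ℝ) 1, C τ = 1 - C (1 - τ))
    (hsymA : ∀ τ ∈ Set.Icc (0:ℝ) 1, ∀ σ ∈ Set.Icc (0:ℝ) 1,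
      Abar τ σ = B (1 - σ) * (1 - C (1 - τ)) - Bbar (1 - σ) + Abar (1 - τ) (1 - σ))
    (hsymBbar : ∀ τ ∈ Set.Icc (0:ℝ) 1, Bbar τ = B (1 - τ) - Bbar (1 - τ))
    (hsymB : ∀ τ ∈ Set.Icc (0:ℝ) 1, B τ = B (1 - τ))
    (h t₀ : ℝ) (q₀ q₀' q₁ q₁' : Fin d → ℝ)
    (Q : ℝ → Fin d → ℝ) (hQ : ContinuousOn Q (Set.Icc 0 1))
    (hmethod : csRKN f Abar Bbar B C h t₀ q₀ q₀' Q q₁ q₁') :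
    csRKN f Abar Bbar B C (-h) (t₀ + h) q₁ q₁' (fun τ => Q (1 - τ)) q₀ q₀' := by
  obtain ⟨hstage, hq₁, hq₁'⟩ := hmethod
  have hg : ContinuousOn (fun σ => f (t₀ + C σ * h) (Q σ)) (Icc 0 1) :=
    hf.comp_continuousOn ((continuous_const.add (hCc.mul continuous_const)).continuousOn.prodMk hQ)
  have hrev := integral_smul_reversed_stage_force f hsymC h t₀ Q
  refine ⟨fun τ hτ => ?_, ?_, ?_⟩ <;> beta_reduce <;> rw [hrev]
  · have hAτ : ContinuousOn (Abar (1 - τ)) (Icc 0 1) :=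
      (hAc.comp (continuous_const.prodMk continuous_id)).continuousOn
    rw [integral_smul_congr_of_eqOn _ (eqOn_Abar_one_sub hsymC hsymA hτ),
      integral_const_mul_sub_add_smul _ hBc.continuousOn hBbarc.continuousOn hAτ hg,
      hq₁, hq₁', hstage (1 - τ) (Icc.one_sub_mem hτ), hsymC τ hτ]
    module
  · rw [integral_smul_congr_of_eqOn _ (eqOn_Bbar_one_sub hsymBbar hsymB),
      integral_sub_smul hBc.continuousOn hBbarc.continuousOn hg, hq₁, hq₁']
    module
  · rw [integral_smul_congr_of_eqOn _ fun σ hσ => (hsymB σ hσ).symm, hq₁']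
    module

end
end

section
/- (Theorem 3.2) Let P_k denote the normalized shifted Legendre polynomial of degree k on [0,1] and ξ₁ = 1/(2√3). Let S be a finite set of pairs (i,j) of nonnegative integers such that i + j is even and i + j > 1 for every (i,j) ∈ S, let α₀₀ ∈ ℝ and α_{(i,j)} ∈ ℝ for (i,j) ∈ S, and define Ā(τ,σ) = α₀₀ − (ξ₁/2) P₁(σ) + (ξ₁/2) P₁(τ) + Σ_{(i,j)∈S} α_{(i,j)} P_i(τ) P_j(σ). Then Ā(τ,σ) − Ā(1−τ,1−σ) = τ − σ for all τ, σ ∈ [0,1], and consequently the csRKN method with coefficients (Ā, B̄(τ) = 1 − τ, B(τ) = 1, C(τ) = τ) satisfies the symmetry conditions C(τ) = 1 − C(1−τ), Ā(τ,σ) = B(1−σ)(1 − C(1−τ)) − B̄(1−σ) + Ā(1−τ,1−σ), B̄(τ) = B(1−τ) − B̄(1−τ), B(τ) = B(1−τ) for all τ, σ ∈ [0,1]. -/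
/-! The symmetry `Ā(τ,σ) - Ā(1-τ,1-σ) = τ - σ` comes from the reflection law
`P_k(1-x) = (-1)ᵏ P_k(x)`, which holds because the Rodrigues kernel `(x² - x)ᵏ` is invariant
under `x ↦ 1 - x` while each derivative contributes a sign. Hence every product
`P_i(τ) P_j(σ)` with `i + j` even is unchanged by the reflection, and only the degree-one terms
survive in the difference; the normalization `ξ₁ P₁(x) = x - 1/2` makes them add up to `τ - σ`.
The remaining symmetry conditions then reduce to this identity. -/

open Set

noncomputable section

/-- The normalized shifted Legendre polynomial of degree `k` on `[0,1]`,
given by the Rodrigues formula `P_k(x) = (√(2k+1)/k!) dᵏ/dxᵏ [(x² - x)ᵏ]`. -/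
def legP (k : ℕ) (x : ℝ) : ℝ :=
  (Real.sqrt (2 * (k : ℝ) + 1) / (Nat.factorial k : ℝ)) *
    iteratedDeriv k (fun y : ℝ => (y ^ 2 - y) ^ k) x

/-- `ξ₁ = 1/(2√3)`. -/
def xi1 : ℝ := 1 / (2 * Real.sqrt 3)

lemma legP_one_sub (k : ℕ) (x : ℝ) : legP k (1 - x) = (-1) ^ k * legP k x := by
  set g : ℝ → ℝ := fun y => (y ^ 2 - y) ^ k
  have hg : (fun y => g (1 - y)) = g := by
    funext y
    simp only [g]
    ring
  have hderiv : iteratedDeriv k g (1 - x) = (-1) ^ k * iteratedDeriv k g x := by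
    conv_lhs => rw [← hg]
    simp only [iteratedDeriv_comp_const_sub, sub_sub_cancel, smul_eq_mul]
  simp only [legP]
  rw [hderiv]
  ring

lemma legP_one_sub_mul_legP_one_sub {i j : ℕ} (hij : Even (i + j)) (τ σ : ℝ) :
    legP i (1 - τ) * legP j (1 - σ) = legP i τ * legP j σ := by
  have hsign : (-1 : ℝ) ^ i * (-1) ^ j = 1 := by
    rw [← pow_add, hij.neg_one_pow]
  rw [legP_one_sub, legP_one_sub]
  linear_combination legP i τ * legP j σ * hsign

lemma legP_one (x : ℝ) : legP 1 x = Real.sqrt 3 * (2 * x - 1) := by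
  have hderiv : deriv (fun y : ℝ => (y ^ 2 - y) ^ 1) x = 2 * x - 1 := by
    simp only [pow_one]
    exact (((hasDerivAt_pow 2 x).sub (hasDerivAt_id' x)).congr_deriv (by norm_num)).deriv
  simp only [legP, iteratedDeriv_one, hderiv]
  norm_num

lemma xi1_mul_legP_one (x : ℝ) : xi1 * legP 1 x = x - 1 / 2 := by
  have hsqrt3 : Real.sqrt 3 ≠ 0 := by positivity
  rw [legP_one, xi1]
  field_simp

/-- Theorem 3.2: if
`Ā(τ,σ) = α₀₀ - (ξ₁/2)P₁(σ) + (ξ₁/2)P₁(τ) + Σ_{(i,j)∈S} α_{(i,j)} P_i(τ)P_j(σ)`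
with `i + j` even and `> 1` for all `(i,j) ∈ S`, then
`Ā(τ,σ) - Ā(1-τ,1-σ) = τ - σ` on `[0,1]²`, and consequently the coefficients
`(Ā, B̄(τ)=1-τ, B(τ)=1, C(τ)=τ)` satisfy the csRKN symmetry conditions. -/
theorem legendre_expansion_symmetric
    (S : Finset (ℕ × ℕ)) (hS : ∀ p ∈ S, Even (p.1 + p.2) ∧ 1 < p.1 + p.2)
    (α₀₀ : ℝ) (α : ℕ × ℕ → ℝ)
    (Abar : ℝ → ℝ → ℝ) (Bbar B C : ℝ → ℝ)
    (hAbar : ∀ τ σ : ℝ, Abar τ σ =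
      α₀₀ - (xi1 / 2) * legP 1 σ + (xi1 / 2) * legP 1 τ +
        ∑ p ∈ S, α p * legP p.1 τ * legP p.2 σ)
    (hBbar : ∀ τ, Bbar τ = 1 - τ) (hB : ∀ τ, B τ = 1) (hC : ∀ τ, C τ = τ) :
    (∀ τ ∈ Set.Icc (0:ℝ) 1, ∀ σ ∈ Set.Icc (0:ℝ) 1,
        Abar τ σ - Abar (1 - τ) (1 - σ) = τ - σ) ∧
    (∀ τ ∈ Set.Icc (0:ℝ) 1, C τ = 1 - C (1 - τ)) ∧
    (∀ τ ∈ Set.Icc (0:ℝ) 1, ∀ σ ∈ Set.Icc (0:ℝ) 1,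
        Abar τ σ = B (1 - σ) * (1 - C (1 - τ)) - Bbar (1 - σ) + Abar (1 - τ) (1 - σ)) ∧
    (∀ τ ∈ Set.Icc (0:ℝ) 1, Bbar τ = B (1 - τ) - Bbar (1 - τ)) ∧
    (∀ τ ∈ Set.Icc (0:ℝ) 1, B τ = B (1 - τ)) := by
  have hAbar_sub (τ σ : ℝ) : Abar τ σ - Abar (1 - τ) (1 - σ) = τ - σ := by
    have hsum : ∑ p ∈ S, α p * legP p.1 (1 - τ) * legP p.2 (1 - σ)
        = ∑ p ∈ S, α p * legP p.1 τ * legP p.2 σ := by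
      refine Finset.sum_congr rfl fun p hp => ?_
      rw [mul_assoc, mul_assoc, legP_one_sub_mul_legP_one_sub (hS p hp).1]
    rw [hAbar, hAbar, hsum]
    linear_combination (1 / 2 : ℝ) * (xi1_mul_legP_one τ - xi1_mul_legP_one σ
      - xi1_mul_legP_one (1 - τ) + xi1_mul_legP_one (1 - σ))
  refine ⟨fun τ _ σ _ => hAbar_sub τ σ, fun τ _ => ?_, fun τ _ σ _ => ?_, fun τ _ => ?_,
    fun τ _ => ?_⟩
  · rw [hC, hC]; ring
  · rw [hB, hC, hBbar]; linear_combination hAbar_sub τ σ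
  · rw [hBbar, hB, hBbar]; ring
  · rw [hB, hB]
end
end

section
/- (Theorem 4.1) Let Ā : [0,1]×[0,1] → ℝ and B̄, B, C : [0,1] → ℝ satisfy the symmetry conditions C(τ) = 1 − C(1−τ), Ā(τ,σ) = B(1−σ)(1 − C(1−τ)) − B̄(1−σ) + Ā(1−τ,1−σ), B̄(τ) = B(1−τ) − B̄(1−τ), B(τ) = B(1−τ) for all τ, σ ∈ [0,1]. Let (b_i, c_i)_{i=1}^s be quadrature weights and nodes with c_i ∈ [0,1], b_{s+1−i} = b_i and c_{s+1−i} = 1 − c_i for all i = 1,…,s. Define the s-stage RKN coefficients ā_{ij} = b_j Ā(c_i, c_j), b̄_i = b_i B̄(c_i), β_i = b_i B(c_i), γ_i = C(c_i). Then these coefficients satisfy the classical RKN symmetry conditions: γ_i = 1 − γ_{s+1−i}, ā_{ij} = β_{s+1−j}(1 − γ_{s+1−i}) − b̄_{s+1−j} + ā_{s+1−i,s+1−j}, b̄_i = β_{s+1−i} − b̄_{s+1−i}, and β_i = β_{s+1−i}, for all i, j = 1,…,s. -/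
open Set

noncomputable section

/-- Theorem 4.1: if the csRKN coefficients `(Ā, B̄, B, C)` satisfy the
symmetry conditions on `[0,1]` and the quadrature formula `(bᵢ, cᵢ)` satisfies
`b_{s+1-i} = bᵢ` and `c_{s+1-i} = 1 - cᵢ`, then the induced `s`-stage RKN coefficients
`āᵢⱼ = bⱼ Ā(cᵢ,cⱼ)`, `b̄ᵢ = bᵢ B̄(cᵢ)`, `βᵢ = bᵢ B(cᵢ)`, `γᵢ = C(cᵢ)` satisfy the
classical RKN symmetry conditions.  (Here `i.rev` plays the role of `s+1-i`.) -/
theorem quadrature_preserves_symmetry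
    (Abar : ℝ → ℝ → ℝ) (Bbar B C : ℝ → ℝ)
    (hsymC : ∀ τ ∈ Set.Icc (0:ℝ) 1, C τ = 1 - C (1 - τ))
    (hsymA : ∀ τ ∈ Set.Icc (0:ℝ) 1, ∀ σ ∈ Set.Icc (0:ℝ) 1,
        Abar τ σ = B (1 - σ) * (1 - C (1 - τ)) - Bbar (1 - σ) + Abar (1 - τ) (1 - σ))
    (hsymBbar : ∀ τ ∈ Set.Icc (0:ℝ) 1, Bbar τ = B (1 - τ) - Bbar (1 - τ))
    (hsymB : ∀ τ ∈ Set.Icc (0:ℝ) 1, B τ = B (1 - τ))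
    (s : ℕ) (b c : Fin s → ℝ)
    (hc : ∀ i, c i ∈ Set.Icc (0:ℝ) 1)
    (hbrev : ∀ i : Fin s, b i.rev = b i)
    (hcrev : ∀ i : Fin s, c i.rev = 1 - c i) :
    (∀ i : Fin s, C (c i) = 1 - C (c i.rev)) ∧
    (∀ i j : Fin s, b j * Abar (c i) (c j) =
        (b j.rev * B (c j.rev)) * (1 - C (c i.rev)) - b j.rev * Bbar (c j.rev) +
          b j.rev * Abar (c i.rev) (c j.rev)) ∧
    (∀ i : Fin s, b i * Bbar (c i) = b i.rev * B (c i.rev) - b i.rev * Bbar (c i.rev)) ∧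
    (∀ i : Fin s, b i * B (c i) = b i.rev * B (c i.rev)) := by
  refine ⟨fun i => ?_, fun i j => ?_, fun i => ?_, fun i => ?_⟩
  · rw [hcrev]; exact hsymC _ (hc i)
  · rw [hbrev, hcrev, hcrev]
    rw [hsymA _ (hc i) _ (hc j)]; ring
  · rw [hbrev, hcrev]; rw [hsymBbar _ (hc i)]; ring
  · rw [hbrev, hcrev]; exact congrArg _ (hsymB _ (hc i))

end
end

section
/- (Theorem 3.3, order-2 part) Let P_k denote the normalized shifted Legendre polynomial of degree k on [0,1] and ξ₁ = 1/(2√3). Let S be a finite set of pairs (i,j) of nonnegative integers with i + j even and i + j > 1 for every (i,j) ∈ S, and define Ā(τ,σ) = α₀₀ − (ξ₁/2) P₁(σ) + (ξ₁/2) P₁(τ) + Σ_{(i,j)∈S} α_{(i,j)} P_i(τ) P_j(σ), with arbitrary real α₀₀, α_{(i,j)}, together with B̄(τ) = 1 − τ, B(τ) = 1, C(τ) = τ. Then the corresponding csRKN method is of order at least 2: for every smooth f : ℝ × ℝ^d → ℝ^d, every exact solution q of q'' = f(t,q) with q(t₀) = q₀, q'(t₀) = q₀', and every family of continuous stage functions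 Q_h with outputs (q₁(h), q₁'(h)) satisfying the csRKN equations with step size h and Q_h → q₀ uniformly as h → 0, one has ‖q(t₀+h) − q₁(h)‖ = O(h³) and ‖q'(t₀+h) − q₁'(h)‖ = O(h³) as h → 0. -/
open Set MeasureTheory Filter Asymptotics

noncomputable section

section csRKNHelpers

lemma legP_continuous (k : ℕ) : Continuous (legP k) := by
  have h : ContDiff ℝ (⊤ : ℕ∞) (fun y : ℝ => (y ^ 2 - y) ^ k) :=
    ((contDiff_id.pow 2).sub contDiff_id).pow k
  exact continuous_const.mul (h.continuous_iteratedDeriv k (by exact_mod_cast le_top))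

lemma csRKN_ftc2 {d : ℕ} (q q' g : ℝ → Fin d → ℝ) (hg : Continuous g)
    (hq : ∀ t, HasDerivAt q (q' t) t) (hq' : ∀ t, HasDerivAt q' (g t) t) (a b : ℝ) :
    q b - q a - (b - a) • q' a = ∫ t in a..b, (b - t) • g t := by
  have hD : ∀ t, HasDerivAt (fun t => q t + (b - t) • q' t) ((b - t) • g t) t := by
    intro t
    have h2 : HasDerivAt (fun t : ℝ => (b - t) • q' t)
        ((b - t) • g t + (-1 : ℝ) • q' t) t :=
      HasDerivAt.smul (by simpa using (hasDerivAt_id t).const_sub b) (hq' t)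
    have h3 := (hq t).add h2
    refine h3.congr_deriv ?_
    rw [neg_one_smul]; abel
  have hint : IntervalIntegrable (fun t => (b - t) • g t) MeasureTheory.volume a b :=
    ((continuous_const.sub continuous_id).smul hg).intervalIntegrable a b
  have := intervalIntegral.integral_eq_sub_of_hasDerivAt (fun t _ => hD t) hint
  rw [this]
  simp only [sub_self, zero_smul, add_zero]
  module

lemma csRKN_ftc1 {d : ℕ} (q' g : ℝ → Fin d → ℝ) (hg : Continuous g)
    (hq' : ∀ t, HasDerivAt q' (g t) t) (a b : ℝ) :
    q' b - q' a = ∫ t in a..b, g t := by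
  rw [intervalIntegral.integral_eq_sub_of_hasDerivAt (fun t _ => hq' t)
    (hg.intervalIntegrable a b)]

lemma csRKN_abs_sub_le_of_uIcc {a b x : ℝ} (hx : x ∈ Set.uIcc a b) : |x - a| ≤ |b - a| := by
  rcases Set.mem_uIcc.1 hx with ⟨h1, h2⟩ | ⟨h1, h2⟩
  · exact abs_le.2 ⟨le_trans (neg_nonpos.2 (abs_nonneg _)) (by linarith),
      le_trans (by linarith) (le_abs_self _)⟩
  · exact abs_le.2 ⟨le_trans (neg_abs_le _) (by linarith),
      le_trans (by linarith) (abs_nonneg _)⟩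

end csRKNHelpers

/-- Theorem 3.3, order-2 part: the symmetric csRKN method with
`Ā(τ,σ) = α₀₀ - (ξ₁/2)P₁(σ) + (ξ₁/2)P₁(τ) + Σ_{(i,j)∈S} α_{(i,j)} P_i(τ)P_j(σ)`
(`i + j` even, `> 1` on `S`), `B̄(τ) = 1 - τ`, `B(τ) = 1`, `C(τ) = τ` is of order at
least 2: the local errors are `O(h³)` as `h → 0`. -/
theorem csRKN_symmetric_order_two {d : ℕ}
    (S : Finset (ℕ × ℕ)) (hS : ∀ pr ∈ S, Even (pr.1 + pr.2) ∧ 1 < pr.1 + pr.2)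
    (α₀₀ : ℝ) (α : ℕ × ℕ → ℝ) (Abar : ℝ → ℝ → ℝ)
    (hAbar : ∀ τ σ : ℝ, Abar τ σ =
      α₀₀ - (xi1 / 2) * legP 1 σ + (xi1 / 2) * legP 1 τ +
        ∑ pr ∈ S, α pr * legP pr.1 τ * legP pr.2 σ)
    (f : ℝ → (Fin d → ℝ) → (Fin d → ℝ))
    (hf : ContDiff ℝ (⊤ : ℕ∞) fun pr : ℝ × (Fin d → ℝ) => f pr.1 pr.2)
    (t₀ : ℝ) (q₀ q₀' : Fin d → ℝ) (q q' : ℝ → Fin d → ℝ)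
    (hq : ∀ t, HasDerivAt q (q' t) t)
    (hq' : ∀ t, HasDerivAt q' (f t (q t)) t)
    (hq0 : q t₀ = q₀) (hq0' : q' t₀ = q₀')
    (Q : ℝ → ℝ → Fin d → ℝ) (q₁ q₁' : ℝ → Fin d → ℝ)
    (heqs : ∀ᶠ h in nhds (0:ℝ), ContinuousOn (Q h) (Set.Icc 0 1) ∧
        csRKN f Abar (fun τ => 1 - τ) (fun _ => 1) (fun τ => τ)
          h t₀ q₀ q₀' (Q h) (q₁ h) (q₁' h))
    (hconv : TendstoUniformlyOn Q (fun _ => q₀) (nhds (0:ℝ)) (Set.Icc 0 1)) :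
    ((fun h : ℝ => q (t₀ + h) - q₁ h) =O[nhds 0] fun h : ℝ => h ^ 3) ∧
    ((fun h : ℝ => q' (t₀ + h) - q₁' h) =O[nhds 0] fun h : ℝ => h ^ 3) := by
  classical
  have hFc : Continuous fun pr : ℝ × (Fin d → ℝ) => f pr.1 pr.2 := hf.continuous
  have hqc : Continuous q := continuous_iff_continuousAt.2 fun t => (hq t).continuousAt
  have hgc : Continuous fun t => f t (q t) := hFc.comp (continuous_id.prodMk hqc)
  -- Lipschitz constant on a neighborhood of (t₀, q₀)
  obtain ⟨L, u, hu, hlip⟩ :=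
    ((hf.of_le (by simp)).contDiffAt (x := ((t₀, q₀) : ℝ × (Fin d → ℝ)))).exists_lipschitzOnWith
  obtain ⟨ε, hε0, hball⟩ := Metric.mem_nhds_iff.1 hu
  set r : ℝ := ε / 2 with hr
  have hr0 : 0 < r := by positivity
  have hsub : Metric.closedBall ((t₀, q₀) : ℝ × (Fin d → ℝ)) r ⊆ u :=
    (Metric.closedBall_subset_ball (by rw [hr]; linarith)).trans hball
  obtain ⟨M, hM⟩ :=
    (isCompact_closedBall ((t₀, q₀) : ℝ × (Fin d → ℝ)) r).exists_bound_of_continuousOn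
      hFc.continuousOn
  have hM0 : 0 ≤ M := (norm_nonneg _).trans (hM _ (Metric.mem_closedBall_self hr0.le))
  have hmem : ∀ (s : ℝ) (y : Fin d → ℝ), |s - t₀| ≤ r → dist y q₀ ≤ r →
      (s, y) ∈ Metric.closedBall ((t₀, q₀) : ℝ × (Fin d → ℝ)) r := by
    intro s y h1 h2
    rw [Metric.mem_closedBall, Prod.dist_eq]
    exact max_le (by rwa [Real.dist_eq]) h2
  -- bound on Abar over the unit square
  have hAc : Continuous fun p : ℝ × ℝ => Abar p.1 p.2 := by
    have he : (fun p : ℝ × ℝ => Abar p.1 p.2) = fun p : ℝ × ℝ =>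
        α₀₀ - (xi1 / 2) * legP 1 p.2 + (xi1 / 2) * legP 1 p.1 +
          ∑ pr ∈ S, α pr * legP pr.1 p.1 * legP pr.2 p.2 := by
      funext p; exact hAbar p.1 p.2
    rw [he]
    exact (((continuous_const.sub
        (continuous_const.mul ((legP_continuous 1).comp continuous_snd))).add
        (continuous_const.mul ((legP_continuous 1).comp continuous_fst))).add
      (continuous_finset_sum _ fun pr _ =>
        ((continuous_const.mul ((legP_continuous pr.1).comp continuous_fst)).mul
          ((legP_continuous pr.2).comp continuous_snd))))
  obtain ⟨A, hA⟩ :=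
    ((isCompact_Icc (a := (0:ℝ)) (b := 1)).prod (isCompact_Icc (a := (0:ℝ)) (b := 1))).exists_bound_of_continuousOn hAc.continuousOn
  have hA0 : 0 ≤ A := (norm_nonneg _).trans
    (hA ((0:ℝ), (0:ℝ)) (Set.mem_prod.2 ⟨by norm_num, by norm_num⟩))
  -- continuity of q at t₀
  obtain ⟨δ, hδ0, hδ⟩ := Metric.continuousAt_iff.1 hqc.continuousAt r hr0
  set C₀ : ℝ := (L : ℝ) * (M + A * M) with hC₀
  have hC₀0 : 0 ≤ C₀ := by positivity
  have key : ∀ᶠ h in nhds (0 : ℝ),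
      ‖q (t₀ + h) - q₁ h‖ ≤ C₀ * ‖h ^ 3‖ ∧ ‖q' (t₀ + h) - q₁' h‖ ≤ C₀ * ‖h ^ 3‖ := by
    have hsmall : ∀ᶠ h in nhds (0:ℝ), |h| < min δ (min r 1) := by
      filter_upwards [Metric.ball_mem_nhds (0:ℝ)
        (show (0:ℝ) < min δ (min r 1) by positivity)] with h hh
      simpa only [Metric.mem_ball, Real.dist_eq, sub_zero] using hh
    have hunif := Metric.tendstoUniformlyOn_iff.1 hconv r hr0
    filter_upwards [hsmall, hunif, heqs] with h hsm hQr hcs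
    obtain ⟨hQc, hstage, hq1, hq1'⟩ := hcs
    have hh1 : |h| < δ := lt_of_lt_of_le hsm (min_le_left _ _)
    have hh2 : |h| ≤ r := le_of_lt (lt_of_lt_of_le hsm ((min_le_right _ _).trans (min_le_left _ _)))
    have hh3 : |h| ≤ 1 := le_of_lt (lt_of_lt_of_le hsm ((min_le_right _ _).trans (min_le_right _ _)))
    have habs : ∀ τ ∈ Set.Icc (0:ℝ) 1, |τ * h| ≤ |h| := by
      intro τ hτ
      rw [abs_mul]
      calc |τ| * |h| ≤ 1 * |h| :=
            mul_le_mul_of_nonneg_right (by rw [abs_of_nonneg hτ.1]; exact hτ.2) (abs_nonneg h)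
        _ = |h| := one_mul _
    -- exact solution stays in the ball
    have hsolK : ∀ s : ℝ, |s - t₀| ≤ |h| →
        (s, q s) ∈ Metric.closedBall ((t₀, q₀) : ℝ × (Fin d → ℝ)) r := by
      intro s hs
      refine hmem _ _ (hs.trans hh2) ?_
      have := hδ (x := s) (by rw [Real.dist_eq]; exact lt_of_le_of_lt hs hh1)
      rw [hq0] at this
      exact this.le
    have hgM : ∀ s : ℝ, |s - t₀| ≤ |h| → ‖f s (q s)‖ ≤ M := fun s hs => hM _ (hsolK s hs)
    -- stages stay in the ball
    have hQK : ∀ τ ∈ Set.Icc (0:ℝ) 1,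
        (t₀ + τ * h, Q h τ) ∈ Metric.closedBall ((t₀, q₀) : ℝ × (Fin d → ℝ)) r := by
      intro τ hτ
      refine hmem _ _ ?_ (by rw [dist_comm]; exact (hQr τ hτ).le)
      rw [add_sub_cancel_left]
      exact (habs τ hτ).trans hh2
    have hQM : ∀ τ ∈ Set.Icc (0:ℝ) 1, ‖f (t₀ + τ * h) (Q h τ)‖ ≤ M :=
      fun τ hτ => hM _ (hQK τ hτ)
    -- Taylor estimate for the exact solution
    have hsol : ∀ τ ∈ Set.Icc (0:ℝ) 1,
        ‖q (t₀ + τ * h) - q₀ - (τ * h) • q₀'‖ ≤ M * h ^ 2 := by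
      intro τ hτ
      have e1 := csRKN_ftc2 q q' (fun t => f t (q t)) hgc hq hq' t₀ (t₀ + τ * h)
      rw [hq0, hq0', add_sub_cancel_left] at e1
      rw [e1]
      have hb : ∀ x ∈ Set.uIoc t₀ (t₀ + τ * h),
          ‖(t₀ + τ * h - x) • f x (q x)‖ ≤ |h| * M := by
        intro x hx
        have hx1 : x ∈ Set.uIcc t₀ (t₀ + τ * h) := Set.uIoc_subset_uIcc hx
        have hxa : |x - t₀| ≤ |τ * h| := by
          have := csRKN_abs_sub_le_of_uIcc hx1
          simpa [add_sub_cancel_left] using this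
        have hxb : |t₀ + τ * h - x| ≤ |τ * h| := by
          have hx2 : x ∈ Set.uIcc (t₀ + τ * h) t₀ := by rwa [Set.uIcc_comm]
          have := csRKN_abs_sub_le_of_uIcc hx2
          rw [abs_sub_comm]
          calc |x - (t₀ + τ * h)| ≤ |t₀ - (t₀ + τ * h)| := this
            _ = |τ * h| := by rw [abs_sub_comm, add_sub_cancel_left]
        rw [norm_smul, Real.norm_eq_abs]
        exact mul_le_mul (hxb.trans (habs τ hτ))
          (hgM x (hxa.trans (habs τ hτ))) (norm_nonneg _) (abs_nonneg h)
      calc ‖∫ x in t₀..t₀ + τ * h, (t₀ + τ * h - x) • f x (q x)‖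
          ≤ (|h| * M) * |t₀ + τ * h - t₀| :=
            intervalIntegral.norm_integral_le_of_norm_le_const hb
        _ ≤ (|h| * M) * |h| := by
            rw [add_sub_cancel_left]
            exact mul_le_mul_of_nonneg_left (habs τ hτ) (by positivity)
        _ = M * h ^ 2 := by rw [← sq_abs]; ring
    -- estimate for the stages
    have hstageEst : ∀ τ ∈ Set.Icc (0:ℝ) 1,
        ‖Q h τ - q₀ - (h * τ) • q₀'‖ ≤ A * M * h ^ 2 := by
      intro τ hτ
      have e := hstage τ hτ
      simp only at e
      have e2 : Q h τ - q₀ - (h * τ) • q₀' =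
          h ^ 2 • ∫ σ in (0:ℝ)..1, Abar τ σ • f (t₀ + σ * h) (Q h σ) := by
        rw [e]; abel
      rw [e2, norm_smul, Real.norm_eq_abs]
      have hb : ∀ σ ∈ Set.uIoc (0:ℝ) 1,
          ‖Abar τ σ • f (t₀ + σ * h) (Q h σ)‖ ≤ A * M := by
        intro σ hσ
        have hσ' : σ ∈ Set.Icc (0:ℝ) 1 :=
          Set.Ioc_subset_Icc_self (by rwa [Set.uIoc_of_le (by norm_num)] at hσ)
        rw [norm_smul]
        exact mul_le_mul (hA (τ, σ) (Set.mem_prod.2 ⟨hτ, hσ'⟩)) (hQM σ hσ')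
          (norm_nonneg _) hA0
      calc |h ^ 2| * ‖∫ σ in (0:ℝ)..1, Abar τ σ • f (t₀ + σ * h) (Q h σ)‖
          ≤ |h ^ 2| * (A * M * |1 - 0|) :=
            mul_le_mul_of_nonneg_left
              (intervalIntegral.norm_integral_le_of_norm_le_const hb) (abs_nonneg _)
        _ = A * M * h ^ 2 := by
            rw [abs_of_nonneg (sq_nonneg h)]
            norm_num; ring
    -- difference of vector fields along solution and stage
    have hdiff : ∀ τ ∈ Set.Icc (0:ℝ) 1,
        ‖f (t₀ + τ * h) (q (t₀ + τ * h)) - f (t₀ + τ * h) (Q h τ)‖ ≤ C₀ * h ^ 2 := by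
      intro τ hτ
      have p1 : (t₀ + τ * h, q (t₀ + τ * h)) ∈
          Metric.closedBall ((t₀, q₀) : ℝ × (Fin d → ℝ)) r :=
        hsolK (t₀ + τ * h) (by rw [add_sub_cancel_left]; exact habs τ hτ)
      have p2 := hQK τ hτ
      have hd := hlip.dist_le_mul _ (hsub p1) _ (hsub p2)
      have hd2 : dist ((t₀ + τ * h, q (t₀ + τ * h)) : ℝ × (Fin d → ℝ))
          (t₀ + τ * h, Q h τ) = dist (q (t₀ + τ * h)) (Q h τ) := by
        rw [Prod.dist_eq]
        simp [max_eq_right dist_nonneg]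
      rw [hd2] at hd
      have hsplit : dist (q (t₀ + τ * h)) (Q h τ) ≤ (M + A * M) * h ^ 2 := by
        have hdd : q (t₀ + τ * h) - Q h τ =
            (q (t₀ + τ * h) - q₀ - (τ * h) • q₀') - (Q h τ - q₀ - (h * τ) • q₀') := by
          module
        rw [dist_eq_norm, hdd]
        calc ‖(q (t₀ + τ * h) - q₀ - (τ * h) • q₀') - (Q h τ - q₀ - (h * τ) • q₀')‖
            ≤ ‖q (t₀ + τ * h) - q₀ - (τ * h) • q₀'‖ + ‖Q h τ - q₀ - (h * τ) • q₀'‖ :=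
              norm_sub_le _ _
          _ ≤ M * h ^ 2 + A * M * h ^ 2 := add_le_add (hsol τ hτ) (hstageEst τ hτ)
          _ = (M + A * M) * h ^ 2 := by ring
      have : dist (f (t₀ + τ * h) (q (t₀ + τ * h))) (f (t₀ + τ * h) (Q h τ)) ≤
          (L : ℝ) * ((M + A * M) * h ^ 2) :=
        hd.trans (mul_le_mul_of_nonneg_left hsplit L.coe_nonneg)
      rw [dist_eq_norm] at this
      calc ‖f (t₀ + τ * h) (q (t₀ + τ * h)) - f (t₀ + τ * h) (Q h τ)‖
          ≤ (L : ℝ) * ((M + A * M) * h ^ 2) := this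
        _ = C₀ * h ^ 2 := by rw [hC₀]; ring
    -- integrability facts
    have hcont1 : Continuous fun τ : ℝ => f (t₀ + τ * h) (q (t₀ + τ * h)) := by
      have : Continuous fun τ : ℝ => t₀ + τ * h := by fun_prop
      exact hFc.comp (this.prodMk (hqc.comp this))
    have hcont2 : ContinuousOn (fun τ : ℝ => f (t₀ + τ * h) (Q h τ)) (Set.Icc 0 1) := by
      have hc : Continuous fun τ : ℝ => t₀ + τ * h := by fun_prop
      exact hFc.comp_continuousOn (hc.continuousOn.prodMk hQc)
    have i1 : IntervalIntegrable (fun τ : ℝ => f (t₀ + τ * h) (q (t₀ + τ * h)))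
        MeasureTheory.volume 0 1 := hcont1.intervalIntegrable _ _
    have i2 : IntervalIntegrable (fun τ : ℝ => f (t₀ + τ * h) (Q h τ))
        MeasureTheory.volume 0 1 := by
      apply ContinuousOn.intervalIntegrable
      rwa [Set.uIcc_of_le (by norm_num : (0:ℝ) ≤ 1)]
    have i3 : IntervalIntegrable (fun τ : ℝ => (1 - τ) • f (t₀ + τ * h) (q (t₀ + τ * h)))
        MeasureTheory.volume 0 1 :=
      ((continuous_const.sub continuous_id).smul hcont1).intervalIntegrable _ _
    have i4 : IntervalIntegrable (fun τ : ℝ => (1 - τ) • f (t₀ + τ * h) (Q h τ))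
        MeasureTheory.volume 0 1 := by
      apply ContinuousOn.intervalIntegrable
      rw [Set.uIcc_of_le (by norm_num : (0:ℝ) ≤ 1)]
      exact ((continuous_const.sub continuous_id).continuousOn).smul hcont2
    -- identity for q'
    have hid1 : q' (t₀ + h) - q₁' h = h • ∫ τ in (0:ℝ)..1,
        (f (t₀ + τ * h) (q (t₀ + τ * h)) - f (t₀ + τ * h) (Q h τ)) := by
      have e1 := csRKN_ftc1 q' (fun t => f t (q t)) hgc hq' t₀ (t₀ + h)
      rw [hq0'] at e1
      have harg : ∀ τ : ℝ, h * τ + t₀ = t₀ + τ * h := fun τ => by ring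
      have e2 : h • (∫ τ in (0:ℝ)..1, f (t₀ + τ * h) (q (t₀ + τ * h))) =
          ∫ t in t₀..t₀ + h, f t (q t) := by
        have h1 := intervalIntegral.smul_integral_comp_mul_add (a := (0:ℝ)) (b := 1)
          (fun t => f t (q t)) h t₀
        rw [show h * 0 + t₀ = t₀ by ring, show h * 1 + t₀ = t₀ + h by ring] at h1
        simp only [harg] at h1
        exact h1
      have e3 : q₁' h = q₀' + h • ∫ τ in (0:ℝ)..1, f (t₀ + τ * h) (Q h τ) := by
        rw [hq1']; simp only [one_smul]
      rw [e3, show q' (t₀ + h) - (q₀' + h • ∫ τ in (0:ℝ)..1, f (t₀ + τ * h) (Q h τ)) =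
        (q' (t₀ + h) - q₀') - h • ∫ τ in (0:ℝ)..1, f (t₀ + τ * h) (Q h τ) from by abel,
        e1, ← e2, ← smul_sub, ← intervalIntegral.integral_sub i1 i2]
    -- identity for q
    have hid2 : q (t₀ + h) - q₁ h = h ^ 2 • ∫ τ in (0:ℝ)..1,
        (1 - τ) • (f (t₀ + τ * h) (q (t₀ + τ * h)) - f (t₀ + τ * h) (Q h τ)) := by
      have e1 := csRKN_ftc2 q q' (fun t => f t (q t)) hgc hq hq' t₀ (t₀ + h)
      rw [hq0, hq0', add_sub_cancel_left] at e1
      have e2 : (∫ t in t₀..t₀ + h, (t₀ + h - t) • f t (q t)) =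
          h ^ 2 • ∫ τ in (0:ℝ)..1, (1 - τ) • f (t₀ + τ * h) (q (t₀ + τ * h)) := by
        have h1 := intervalIntegral.smul_integral_comp_mul_add (a := (0:ℝ)) (b := 1)
          (fun t => (t₀ + h - t) • f t (q t)) h t₀
        rw [show h * 0 + t₀ = t₀ by ring, show h * 1 + t₀ = t₀ + h by ring] at h1
        have h0 : (fun τ : ℝ => (fun t => (t₀ + h - t) • f t (q t)) (h * τ + t₀)) =
            fun τ : ℝ => h • ((1 - τ) • f (t₀ + τ * h) (q (t₀ + τ * h))) := by
          funext τ
          simp only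
          rw [← mul_smul, show h * τ + t₀ = t₀ + τ * h from by ring]
          congr 1
          ring
        rw [h0, intervalIntegral.integral_smul, smul_smul, ← pow_two] at h1
        exact h1.symm
      have e3 : q₁ h = q₀ + h • q₀' + h ^ 2 • ∫ τ in (0:ℝ)..1,
          (1 - τ) • f (t₀ + τ * h) (Q h τ) := by rw [hq1]
      rw [e3, show q (t₀ + h) - (q₀ + h • q₀' + h ^ 2 • ∫ τ in (0:ℝ)..1,
          (1 - τ) • f (t₀ + τ * h) (Q h τ)) =
        (q (t₀ + h) - q₀ - h • q₀') - h ^ 2 • ∫ τ in (0:ℝ)..1,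
          (1 - τ) • f (t₀ + τ * h) (Q h τ) from by abel,
        e1, e2, ← smul_sub, ← intervalIntegral.integral_sub i3 i4]
      simp only [smul_sub]
    -- final bounds
    have hbound : ‖∫ τ in (0:ℝ)..1,
        (f (t₀ + τ * h) (q (t₀ + τ * h)) - f (t₀ + τ * h) (Q h τ))‖ ≤ C₀ * h ^ 2 := by
      have := intervalIntegral.norm_integral_le_of_norm_le_const (C := C₀ * h ^ 2)
        (a := (0:ℝ)) (b := 1)
        (f := fun τ : ℝ => f (t₀ + τ * h) (q (t₀ + τ * h)) - f (t₀ + τ * h) (Q h τ)) ?_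
      · simpa using this
      · intro τ hτ
        exact hdiff τ (Set.Ioc_subset_Icc_self (by rwa [Set.uIoc_of_le (by norm_num)] at hτ))
    have hbound2 : ‖∫ τ in (0:ℝ)..1,
        (1 - τ) • (f (t₀ + τ * h) (q (t₀ + τ * h)) - f (t₀ + τ * h) (Q h τ))‖ ≤ C₀ * h ^ 2 := by
      have := intervalIntegral.norm_integral_le_of_norm_le_const (C := C₀ * h ^ 2)
        (a := (0:ℝ)) (b := 1)
        (f := fun τ : ℝ => (1 - τ) • (f (t₀ + τ * h) (q (t₀ + τ * h)) - f (t₀ + τ * h) (Q h τ))) ?_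
      · simpa using this
      · intro τ hτ
        have hτ' : τ ∈ Set.Icc (0:ℝ) 1 :=
          Set.Ioc_subset_Icc_self (by rwa [Set.uIoc_of_le (by norm_num)] at hτ)
        rw [norm_smul, Real.norm_eq_abs]
        calc |1 - τ| * ‖f (t₀ + τ * h) (q (t₀ + τ * h)) - f (t₀ + τ * h) (Q h τ)‖
            ≤ 1 * (C₀ * h ^ 2) := by
              apply mul_le_mul _ (hdiff τ hτ') (norm_nonneg _) (by norm_num)
              rw [abs_of_nonneg (by linarith [hτ'.2] : (0:ℝ) ≤ 1 - τ)]
              linarith [hτ'.1]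
          _ = C₀ * h ^ 2 := one_mul _
    constructor
    · rw [hid2, norm_smul, Real.norm_eq_abs, abs_of_nonneg (sq_nonneg h)]
      calc h ^ 2 * ‖∫ τ in (0:ℝ)..1,
            (1 - τ) • (f (t₀ + τ * h) (q (t₀ + τ * h)) - f (t₀ + τ * h) (Q h τ))‖
          ≤ h ^ 2 * (C₀ * h ^ 2) := mul_le_mul_of_nonneg_left hbound2 (sq_nonneg h)
        _ = C₀ * |h| ^ 4 := by rw [← sq_abs]; ring
        _ ≤ C₀ * |h| ^ 3 := by
            apply mul_le_mul_of_nonneg_left _ hC₀0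
            exact pow_le_pow_of_le_one (abs_nonneg h) hh3 (by norm_num)
        _ = C₀ * ‖h ^ 3‖ := by rw [Real.norm_eq_abs, abs_pow]
    · rw [hid1, norm_smul, Real.norm_eq_abs]
      calc |h| * ‖∫ τ in (0:ℝ)..1,
            (f (t₀ + τ * h) (q (t₀ + τ * h)) - f (t₀ + τ * h) (Q h τ))‖
          ≤ |h| * (C₀ * h ^ 2) := mul_le_mul_of_nonneg_left hbound (abs_nonneg h)
        _ = C₀ * |h| ^ 3 := by rw [← sq_abs]; ring
        _ = C₀ * ‖h ^ 3‖ := by rw [Real.norm_eq_abs, abs_pow]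
  constructor
  · rw [Asymptotics.isBigO_iff]
    exact ⟨C₀, key.mono fun h hh => hh.1⟩
  · rw [Asymptotics.isBigO_iff]
    exact ⟨C₀, key.mono fun h hh => hh.2⟩


end
end

section
/- (Remark, item (1)) Let P₁(x) = √3(2x−1) and P₂(x) = √5(6x²−6x+1) be the normalized shifted Legendre polynomials of degrees 1 and 2, let α, β, γ ∈ ℝ, and define Ā(τ,σ) = 1/6 − (√3/12) P₁(σ) + (√3/12) P₁(τ) + α P₁(τ)P₁(σ) + β P₂(σ) + γ P₂(τ), B̄(τ) = 1 − τ, B(τ) = 1, C(τ) = τ. Then these coefficients always satisfy B̄(τ) = B(τ)(1 − C(τ)) and the symmetry identity Ā(τ,σ) − Ā(1−τ,1−σ) = τ − σ for all τ, σ ∈ [0,1], and they satisfy the csRKN symplecticity condition B(τ)(B̄(σ) − Ā(τ,σ)) = B(σ)(B̄(τ) − Ā(σ,τ)) for all τ, σ ∈ [0,1] if and only if β = γ. -/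
open Set

noncomputable section

/-- Remark, item (1): with `P₁(x) = √3(2x-1)`, `P₂(x) = √5(6x²-6x+1)`,
`Ā(τ,σ) = 1/6 - (√3/12)P₁(σ) + (√3/12)P₁(τ) + α P₁(τ)P₁(σ) + β P₂(σ) + γ P₂(τ)`,
`B̄(τ) = 1 - τ`, `B(τ) = 1`, `C(τ) = τ`, the conditions `B̄(τ) = B(τ)(1 - C(τ))` and
`Ā(τ,σ) - Ā(1-τ,1-σ) = τ - σ` always hold on `[0,1]`, and the csRKN symplecticity
condition `B(τ)(B̄(σ) - Ā(τ,σ)) = B(σ)(B̄(τ) - Ā(σ,τ))` holds on `[0,1]²` iff `β = γ`. -/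
theorem remark_item1 (α β γ : ℝ)
    (P1 P2 : ℝ → ℝ)
    (hP1 : ∀ x, P1 x = Real.sqrt 3 * (2 * x - 1))
    (hP2 : ∀ x, P2 x = Real.sqrt 5 * (6 * x ^ 2 - 6 * x + 1))
    (Abar : ℝ → ℝ → ℝ) (Bbar B C : ℝ → ℝ)
    (hAbar : ∀ τ σ : ℝ, Abar τ σ =
      1 / 6 - (Real.sqrt 3 / 12) * P1 σ + (Real.sqrt 3 / 12) * P1 τ +
        α * P1 τ * P1 σ + β * P2 σ + γ * P2 τ)
    (hBbar : ∀ τ, Bbar τ = 1 - τ) (hB : ∀ τ, B τ = 1) (hC : ∀ τ, C τ = τ) :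
    (∀ τ ∈ Set.Icc (0:ℝ) 1, Bbar τ = B τ * (1 - C τ)) ∧
    (∀ τ ∈ Set.Icc (0:ℝ) 1, ∀ σ ∈ Set.Icc (0:ℝ) 1,
        Abar τ σ - Abar (1 - τ) (1 - σ) = τ - σ) ∧
    ((∀ τ ∈ Set.Icc (0:ℝ) 1, ∀ σ ∈ Set.Icc (0:ℝ) 1,
        B τ * (Bbar σ - Abar τ σ) = B σ * (Bbar τ - Abar σ τ)) ↔ β = γ) := by
  have h3 : Real.sqrt 3 * Real.sqrt 3 = 3 := Real.mul_self_sqrt (by norm_num)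
  have h5 : Real.sqrt 5 ≠ 0 := by positivity
  refine ⟨?_, ?_, ?_⟩
  · intro τ _
    rw [hBbar, hB, hC]; ring
  · intro τ _ σ _
    simp only [hAbar, hP1, hP2]
    linear_combination ((τ - σ) / 3) * h3
  · constructor
    · intro h
      have key := h (1/2) (by norm_num) 0 (by norm_num)
      simp only [hB, hBbar, hAbar, hP1, hP2] at key
      have hbg : (β - γ) * Real.sqrt 5 = 0 := by
        linear_combination (-2/3) * key - (1/9) * h3
      rcases mul_eq_zero.1 hbg with h' | h'
      · linarith
      · exact absurd h' h5
    · intro hbg τ _ σ _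
      subst hbg
      simp only [hB, hBbar, hAbar, hP1, hP2]
      linear_combination ((σ - τ) / 3) * h3

end
end
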